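/- Assume the polarity is separated, d : Z₁ → Z₁ is monotone, R⋄x = Γ(d x) for every x ∈ Z₁, and R⋄ is smooth. Then the following are equivalent: (1) ⋄(⋄A) ⊆ ⋄A for every stable A ⊆ Z₁; (2) ⋄(⋄(Γx)) ⊆ ⋄(Γx) for every x ∈ Z₁; (3) d x ≼ d(d x) for every x ∈ Z₁; (4) R⋄ is transitive; (5) R''⋄ is transitive. -/
import Mathlib


namespace DFML

variable {Z1 Zd : Type*}

/-- Right polar: U' ⊆ Z∂ for U ⊆ Z₁. -/
def pol1 (P : Z1 → Zd → Prop) (U : Set Z1) : Set Zd := {y | ∀ x ∈ U, P x y}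

/-- Left polar: V' ⊆ Z₁ for V ⊆ Z∂. -/
def pol2 (P : Z1 → Zd → Prop) (V : Set Zd) : Set Z1 := {x | ∀ y ∈ V, P x y}

/-- Galois-stable subsets of Z₁. -/
def stab (P : Z1 → Zd → Prop) (A : Set Z1) : Prop := pol2 P (pol1 P A) = A

/-- Galois co-stable subsets of Z∂. -/
def costab (P : Z1 → Zd → Prop) (B : Set Zd) : Prop := pol1 P (pol2 P B) = B

/-- Preorder on Z₁: u ≼ w iff {u}' ⊆ {w}'. -/
def le1 (P : Z1 → Zd → Prop) (u w : Z1) : Prop := pol1 P {u} ⊆ pol1 P {w}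

/-- Preorder on Z∂: u ≼ w iff {u}' ⊆ {w}'. -/
def led (P : Z1 → Zd → Prop) (u w : Zd) : Prop := pol2 P {u} ⊆ pol2 P {w}

/-- Γu ⊆ Z₁. -/
def Gam1 (P : Z1 → Zd → Prop) (u : Z1) : Set Z1 := {w | le1 P u w}

/-- Γv ⊆ Z∂. -/
def Gamd (P : Z1 → Zd → Prop) (v : Zd) : Set Zd := {w | led P v w}

/-- Closure on Z₁: U''. -/
def cl1 (P : Z1 → Zd → Prop) (U : Set Z1) : Set Z1 := pol2 P (pol1 P U)

/-- Closure on Z∂: V''. -/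
def cld (P : Z1 → Zd → Prop) (V : Set Zd) : Set Zd := pol1 P (pol2 P V)

/-- Separated polarity: ≼ is antisymmetric on each sort. -/
def separated (P : Z1 → Zd → Prop) : Prop :=
  (∀ u w : Z1, le1 P u w → le1 P w u → u = w) ∧
  (∀ u w : Zd, led P u w → led P w u → u = w)

/-- Section R⋄x of a relation R⋄ ⊆ Z₁ × Z₁. -/
def diaSec (R : Z1 → Z1 → Prop) (x : Z1) : Set Z1 := {z | R z x}

/-- Galois dual R'⋄ ⊆ Z∂ × Z₁: y R'⋄ x iff y ∈ (R⋄x)'. -/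
def diaDual (P : Z1 → Zd → Prop) (R : Z1 → Z1 → Prop) (y : Zd) (x : Z1) : Prop :=
  y ∈ pol1 P (diaSec R x)

/-- Double dual R''⋄ ⊆ Z∂ × Z∂: y R''⋄ v iff v ∈ ({x | y R'⋄ x})'. -/
def diaDD (P : Z1 → Zd → Prop) (R : Z1 → Z1 → Prop) (y v : Zd) : Prop :=
  v ∈ pol1 P {x | diaDual P R y x}

/-- Image operator ◇|U = ⋃_{x ∈ U} R⋄x. -/
def diaImg (R : Z1 → Z1 → Prop) (U : Set Z1) : Set Z1 := ⋃ x ∈ U, diaSec R x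

/-- Diamond operator on stable sets: ⋄A = (◇|A)''. -/
def diaOp (P : Z1 → Zd → Prop) (R : Z1 → Z1 → Prop) (A : Set Z1) : Set Z1 :=
  cl1 P (diaImg R A)

/-- R⋄ is smooth: every section of its Galois dual is stable. -/
def diaSmooth (P : Z1 → Zd → Prop) (R : Z1 → Z1 → Prop) : Prop :=
  ∀ y : Zd, stab P {x | diaDual P R y x}

/-- Section R□v of a relation R□ ⊆ Z∂ × Z∂. -/
def boxSec (R : Zd → Zd → Prop) (v : Zd) : Set Zd := {w | R w v}

/-- Galois dual R'□ ⊆ Z₁ × Z∂: x R'□ v iff x ∈ (R□v)'. -/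
def boxDual (P : Z1 → Zd → Prop) (R : Zd → Zd → Prop) (x : Z1) (v : Zd) : Prop :=
  x ∈ pol2 P (boxSec R v)

/-- Double dual R''□ ⊆ Z₁ × Z₁: x R''□ z iff z ∈ ({v | x R'□ v})'. -/
def boxDD (P : Z1 → Zd → Prop) (R : Zd → Zd → Prop) (x z : Z1) : Prop :=
  z ∈ pol2 P {v | boxDual P R x v}

/-- Image operator ◇⁻V = ⋃_{v ∈ V} R□v. -/
def boxImg (R : Zd → Zd → Prop) (V : Set Zd) : Set Zd := ⋃ v ∈ V, boxSec R v

/-- Box operator on stable sets: □A = (◇⁻(A'))'. -/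
def boxOp (P : Z1 → Zd → Prop) (R : Zd → Zd → Prop) (A : Set Z1) : Set Z1 :=
  pol2 P (boxImg R (pol1 P A))

/-- R□ is smooth: every section of its Galois dual is co-stable. -/
def boxSmooth (P : Z1 → Zd → Prop) (R : Zd → Zd → Prop) : Prop :=
  ∀ x : Z1, costab P {v | boxDual P R x v}

end DFML

open DFML

namespace DFMLHelp

open DFML

variable {Z1 Zd : Type*} (P : Z1 → Zd → Prop)

lemma le1_refl (u : Z1) : le1 P u u := fun _ h => h

lemma le1_trans {a b c : Z1} (h1 : le1 P a b) (h2 : le1 P b c) : le1 P a c :=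
  fun y hy => h2 (h1 hy)

lemma le1_iff (u w : Z1) : le1 P u w ↔ ∀ y, P u y → P w y := by
  constructor
  · intro h y hy
    have hmem : y ∈ pol1 P {u} := by
      intro x hx
      rw [Set.mem_singleton_iff] at hx
      rw [hx]; exact hy
    exact h hmem w rfl
  · intro h y hy x hx
    rw [Set.mem_singleton_iff] at hx
    rw [hx]
    exact h y (hy u rfl)

lemma pol1_anti {U V : Set Z1} (h : U ⊆ V) : pol1 P V ⊆ pol1 P U :=
  fun y hy x hx => hy x (h hx)

lemma pol2_anti {U V : Set Zd} (h : U ⊆ V) : pol2 P V ⊆ pol2 P U :=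
  fun x hx y hy => hx y (h hy)

lemma sub_cl1 (U : Set Z1) : U ⊆ cl1 P U := fun x hx y hy => hy x hx

lemma sub_cld (V : Set Zd) : V ⊆ pol1 P (pol2 P V) := fun y hy x hx => hx y hy

lemma pol1_cl1 (U : Set Z1) : pol1 P (cl1 P U) = pol1 P U :=
  Set.Subset.antisymm (pol1_anti P (sub_cl1 P U)) (sub_cld P (pol1 P U))

lemma stab_cl1 (U : Set Z1) : stab P (cl1 P U) := by
  show pol2 P (pol1 P (cl1 P U)) = cl1 P U
  rw [pol1_cl1]
  rfl

lemma Gam1_eq (u : Z1) : Gam1 P u = cl1 P {u} := by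
  ext w
  constructor
  · intro h y hy
    exact h hy w rfl
  · intro h y hy x hx
    rw [Set.mem_singleton_iff] at hx
    rw [hx]
    exact h y hy

end DFMLHelp

open DFMLHelp

/-- equivalent formulations of the S4-axiom for diamond. -/
theorem stmt14 {Z1 Zd : Type*} (P : Z1 → Zd → Prop)
    (sep : separated P)
    (d : Z1 → Z1) (dMono : ∀ x x' : Z1, le1 P x x' → le1 P (d x) (d x'))
    (Rd : Z1 → Z1 → Prop) (hRd : ∀ x : Z1, diaSec Rd x = Gam1 P (d x))
    (hRdsmooth : diaSmooth P Rd) :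
    List.TFAE
      [ ∀ A : Set Z1, stab P A → diaOp P Rd (diaOp P Rd A) ⊆ diaOp P Rd A,
        ∀ x : Z1, diaOp P Rd (diaOp P Rd (Gam1 P x)) ⊆ diaOp P Rd (Gam1 P x),
        ∀ x : Z1, le1 P (d x) (d (d x)),
        ∀ x u z : Z1, Rd x u → Rd u z → Rd x z,
        ∀ y v w : Zd, diaDD P Rd y v → diaDD P Rd v w → diaDD P Rd y w ] := by
  have hR : ∀ a b : Z1, Rd a b ↔ le1 P (d b) a := fun a b => Set.ext_iff.1 (hRd b) a
  have hle := le1_iff P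
  have hDual : ∀ (y : Zd) (x : Z1), diaDual P Rd y x ↔ P (d x) y := by
    intro y x
    show y ∈ pol1 P (diaSec Rd x) ↔ P (d x) y
    rw [hRd x]
    constructor
    · intro h; exact h (d x) (le1_refl P (d x))
    · intro h z hz; exact (hle _ _).1 hz y h
  have hDD : ∀ y v : Zd, diaDD P Rd y v ↔ ∀ x, P (d x) y → P x v := by
    intro y v
    constructor
    · intro h x hx; exact h x ((hDual y x).2 hx)
    · intro h x hx; exact h x ((hDual y x).1 hx)
  have hSstab : ∀ y : Zd, pol2 P (pol1 P {x | P (d x) y}) = {x | P (d x) y} := by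
    intro y
    have he : {x | diaDual P Rd y x} = {x | P (d x) y} := Set.ext fun x => hDual y x
    have := hRdsmooth y
    rw [he] at this
    exact this
  have hImg : ∀ (U : Set Z1) (y : Zd), y ∈ pol1 P (diaImg Rd U) ↔ ∀ x ∈ U, P (d x) y := by
    intro U y
    constructor
    · intro h x hx
      refine h (d x) ?_
      exact Set.mem_biUnion hx (by rw [hRd]; exact le1_refl P (d x))
    · intro h z hz
      obtain ⟨x, hx, hzx⟩ := Set.mem_iUnion₂.1 hz
      rw [hRd] at hzx
      exact (hle _ _).1 hzx y (h x hx)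
  have hOp : ∀ (U : Set Z1) (w : Z1), w ∈ diaOp P Rd U ↔ ∀ y, (∀ x ∈ U, P (d x) y) → P w y := by
    intro U w
    constructor
    · intro h y hy; exact h y ((hImg U y).2 hy)
    · intro h y hy; exact h y ((hImg U y).1 hy)
  tfae_have 1 → 2
  | h1 => by
    intro x
    rw [Gam1_eq]
    exact h1 _ (stab_cl1 P {x})
  tfae_have 2 → 3
  | h2 => by
    have key : ∀ u : Z1, diaOp P Rd (Gam1 P u) = Gam1 P (d u) := by
      intro u
      ext w
      rw [hOp]
      constructor
      · intro h
        show le1 P (d u) w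
        rw [hle]
        intro y hy
        exact h y (fun x' hx' => (hle _ _).1 (dMono u x' hx') y hy)
      · intro hw y hy
        exact (hle _ _).1 hw y (hy u (le1_refl P u))
    intro x
    have h := h2 x
    rw [key x, key (d x)] at h
    exact h (le1_refl P (d (d x)))
  tfae_have 3 → 1
  | h3 => by
    intro A _ w hw
    rw [hOp] at hw ⊢
    intro y hy
    apply hw y
    intro u hu
    have hsub : diaImg Rd A ⊆ {x | P (d x) y} := by
      intro z hz
      obtain ⟨x, hx, hzx⟩ := Set.mem_iUnion₂.1 hz
      rw [hRd] at hzx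
      have hdz : le1 P (d x) (d z) := le1_trans P (h3 x) (dMono _ _ hzx)
      exact (hle _ _).1 hdz y (hy x hx)
    have hfin : diaOp P Rd A ⊆ {x | P (d x) y} := by
      have hmon : cl1 P (diaImg Rd A) ⊆ cl1 P {x | P (d x) y} :=
        pol2_anti P (pol1_anti P hsub)
      have : cl1 P {x | P (d x) y} = {x | P (d x) y} := hSstab y
      rw [this] at hmon
      exact hmon
    exact hfin hu
  tfae_have 3 → 4
  | h3 => by
    intro x u z hxu huz
    rw [hR] at hxu huz ⊢
    exact le1_trans P (le1_trans P (h3 z) (dMono _ _ huz)) hxu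
  tfae_have 4 → 3
  | h4 => by
    intro x
    rw [← hR]
    exact h4 (d (d x)) (d x) x ((hR _ _).2 (le1_refl P _)) ((hR _ _).2 (le1_refl P _))
  tfae_have 3 → 5
  | h3 => by
    intro y v w hyv hvw
    rw [hDD] at hyv hvw ⊢
    intro x hx
    exact hvw x (hyv (d x) ((hle _ _).1 (h3 x) y hx))
  tfae_have 5 → 3
  | h5 => by
    intro x
    rw [hle]
    intro y hy
    have hxy : diaDual P Rd y x := (hDual y x).2 hy
    have hdx : d x ∈ ({z | diaDual P Rd y z} : Set Z1) := by
      rw [← hRdsmooth y]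
      intro v hv
      have hx_in_Sv : x ∈ ({z | diaDual P Rd v z} : Set Z1) := by
        rw [← hRdsmooth v]
        intro w hw
        exact (h5 y v w hv hw) x hxy
      exact (hDual v x).1 hx_in_Sv
    exact (hDual y (d x)).1 hdx
  tfae_finish
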